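/- arXiv:2503.05364 — 5 statements merged into one kernel-verified Lean document; each statement's English description precedes it below -/
import Mathlib

section
/- Completeness of NK±: if φ is true under every valuation (⊨ φ), then φ is derivable in NK± from no assumptions. -/
/-- Literals: assertions `pos c` and denials `neg c` of contents `c`. -/
inductive Lit (C : Type) : Type
  | pos : C → Lit C
  | neg : C → Lit C

/-- Dual literal: swaps assertion and denial. -/
def Lit.dual {C : Type} : Lit C → Lit C
  | .pos c => .neg c
  | .neg c => .pos c

/-- Formulas over literals. -/
inductive Form (C : Type) : Type
  | lit : Lit C → Form C
  | bot : Form C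
  | top : Form C
  | and : Form C → Form C → Form C
  | or  : Form C → Form C → Form C
  | imp : Form C → Form C → Form C

/-- The de Morgan dual operator on formulas. -/
def Form.dual {C : Type} : Form C → Form C
  | .lit l => .lit l.dual
  | .bot => .top
  | .top => .bot
  | .and φ ψ => .or φ.dual ψ.dual
  | .or φ ψ => .and φ.dual ψ.dual
  | .imp φ ψ => .and φ ψ.dual

/-- A valuation: maps literals to {0,1} with `v (neg c) = 1 - v (pos c)`. -/
structure Val (C : Type) where
  v : Lit C → ℕ
  le_one : ∀ l, v l ≤ 1
  dual_neg : ∀ c : C, v (Lit.neg c) = 1 - v (Lit.pos c)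

/-- Truth-functional extension of a valuation to formulas. -/
def Val.eval {C : Type} (v : Val C) : Form C → ℕ
  | .lit l => v.v l
  | .bot => 0
  | .top => 1
  | .and φ ψ => min (v.eval φ) (v.eval ψ)
  | .or φ ψ => max (v.eval φ) (v.eval ψ)
  | .imp φ ψ => max (1 - v.eval φ) (v.eval ψ)

/-- Classical consequence. -/
def Entails {C : Type} (Γ : Set (Form C)) (φ : Form C) : Prop :=
  ∀ v : Val C, (∀ γ ∈ Γ, v.eval γ = 1) → v.eval φ = 1

/-- The natural deduction system NK±: intuitionistic rules plus DM and EXC. -/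
inductive NK {C : Type} : Set (Form C) → Form C → Prop
  | hyp {Γ} {φ : Form C} : φ ∈ Γ → NK Γ φ
  | topI {Γ} : NK Γ .top
  | botE {Γ} {φ : Form C} : NK Γ .bot → NK Γ φ
  | impI {Γ} {φ ψ : Form C} : NK (insert φ Γ) ψ → NK Γ (.imp φ ψ)
  | impE {Γ} {φ ψ : Form C} : NK Γ (.imp φ ψ) → NK Γ φ → NK Γ ψ
  | andI {Γ} {φ ψ : Form C} : NK Γ φ → NK Γ ψ → NK Γ (.and φ ψ)
  | andE1 {Γ} {φ ψ : Form C} : NK Γ (.and φ ψ) → NK Γ φ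
  | andE2 {Γ} {φ ψ : Form C} : NK Γ (.and φ ψ) → NK Γ ψ
  | orI1 {Γ} {φ ψ : Form C} : NK Γ φ → NK Γ (.or φ ψ)
  | orI2 {Γ} {φ ψ : Form C} : NK Γ ψ → NK Γ (.or φ ψ)
  | orE {Γ} {φ ψ χ : Form C} :
      NK Γ (.or φ ψ) → NK (insert φ Γ) χ → NK (insert ψ Γ) χ → NK Γ χ
  | dm {Γ} {φ : Form C} : NK (insert φ Γ) .bot → NK Γ φ.dual
  | exc {Γ} {φ : Form C} : NK Γ φ → NK Γ φ.dual → NK Γ .bot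

/-- An atomic rule `(L₁⇒l₁),…,(Lₙ⇒lₙ) ⇒ l` (the case of an empty premiss list,
together with `APP₁`/`APP₂`, covers both forms of atomic rule). -/
structure AtomicRule (C : Type) where
  prems : List (Set (Lit C) × Lit C)
  concl : Lit C

/-- A base is a set of atomic rules. -/
abbrev Base (C : Type) := Set (AtomicRule C)

/-- Derivability in a base.  Conclusions are `some l` (a literal) or `none` (⊥).
Closed under REF, APP₁/APP₂, ABS and DM. -/
inductive Deriv {C : Type} (B : Base C) : Set (Lit C) → Option (Lit C) → Prop
  | ref {L} {l : Lit C} : l ∈ L → Deriv B L (some l)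
  | app {L} (r : AtomicRule C) : r ∈ B →
      (∀ p ∈ r.prems, Deriv B (p.1 ∪ L) (some p.2)) → Deriv B L (some r.concl)
  | abs {L} {l : Lit C} : Deriv B L (some l) → Deriv B L (some l.dual) →
      Deriv B L none
  | dm {L} {l : Lit C} : Deriv B (insert l L) none → Deriv B L (some l.dual)

/-- Support in a base (empty context). -/
def Supp {C : Type} (B : Base C) : Form C → Prop
  | .lit l => Deriv B ∅ (some l)
  | .bot => ∀ l : Lit C, Deriv B ∅ (some l)
  | .top => True
  | .and φ ψ => Supp B φ ∧ Supp B ψ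
  | .or φ ψ => ∀ X : Base C, B ⊆ X → ∀ l : Lit C,
      (∀ Y : Base C, X ⊆ Y → Supp Y φ → Deriv Y ∅ (some l)) →
      (∀ Y : Base C, X ⊆ Y → Supp Y ψ → Deriv Y ∅ (some l)) →
      Deriv X ∅ (some l)
  | .imp φ ψ => ∀ X : Base C, B ⊆ X → Supp X φ → Supp X ψ

/-- Support with a context: `Γ ⊩_B φ`. -/
def SuppCtx {C : Type} (B : Base C) (Γ : Set (Form C)) (φ : Form C) : Prop :=
  ∀ X : Base C, B ⊆ X → (∀ γ ∈ Γ, Supp X γ) → Supp X φ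

/-- Validity: support in every base. -/
def Valid {C : Type} (Γ : Set (Form C)) (φ : Form C) : Prop :=
  ∀ B : Base C, SuppCtx B Γ φ

/-! Kalmár's argument. By induction on `φ`, the literals true under a valuation `v` prove `φ`
when `v` makes `φ` true and its de Morgan dual `φ⊥` when `v` makes it false; the implication case
uses EXC and ex falso. If `φ` is a tautology, it is therefore provable from the literals that any
assignment makes true, and these hypotheses are discharged one content at a time by case analysis on
the instance `c⁺ ∨ c⁻` of excluded middle, which DM derives from EXC. -/

namespace Lit

variable {C : Type}

def content : Lit C → C
  | .pos c => c
  | .neg c => c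

@[simp]
theorem content_dual (l : Lit C) : l.dual.content = l.content := by
  cases l <;> rfl

def ofBool (c : C) : Bool → Lit C
  | true => .pos c
  | false => .neg c

end Lit

def Form.contents {C : Type} : Form C → List C
  | .lit l => [l.content]
  | .bot => []
  | .top => []
  | .and φ ψ => φ.contents ++ ψ.contents
  | .or φ ψ => φ.contents ++ ψ.contents
  | .imp φ ψ => φ.contents ++ ψ.contents

def litAssumptions {C : Type} (s : C → Bool) (cs : List C) : Set (Form C) :=
  {γ | ∃ c ∈ cs, γ = .lit (.ofBool c (s c))}

namespace Val

variable {C : Type}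

theorem v_dual (v : Val C) (l : Lit C) : v.v l.dual = 1 - v.v l := by
  cases l with
  | pos c => exact v.dual_neg c
  | neg c =>
    have := v.dual_neg c
    have := v.le_one (.pos c)
    simp only [Lit.dual]
    omega

theorem eval_le_one (v : Val C) (φ : Form C) : v.eval φ ≤ 1 := by
  induction φ with
  | lit l => exact v.le_one l
  | bot | top => simp [eval]
  | and _ _ ih₁ ih₂ | or _ _ ih₁ ih₂ | imp _ _ ih₁ ih₂ => simp only [eval]; omega

def ofAssignment (s : C → Bool) : Val C where
  v
    | .pos c => (s c).toNat
    | .neg c => (!s c).toNat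
  le_one l := by cases l <;> exact Bool.toNat_le _
  dual_neg c := by
    show (!s c).toNat = 1 - (s c).toNat
    cases s c <;> rfl

theorem eq_ofBool_of_ofAssignment_eq_one {s : C → Bool} {l : Lit C}
    (h : (ofAssignment s).v l = 1) : l = .ofBool l.content (s l.content) := by
  cases l with
  | pos c | neg c => cases hc : s c <;> simp_all [ofAssignment, Lit.ofBool, Lit.content]

end Val

namespace NK

variable {C : Type}

theorem mono {Γ Δ : Set (Form C)} {φ : Form C} (h : NK Γ φ) (hs : Γ ⊆ Δ) : NK Δ φ := by
  induction h generalizing Δ with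
  | hyp h => exact hyp (hs h)
  | topI => exact topI
  | botE _ ih => exact botE (ih hs)
  | impI _ ih => exact impI (ih (Set.insert_subset_insert hs))
  | impE _ _ ih₁ ih₂ => exact impE (ih₁ hs) (ih₂ hs)
  | andI _ _ ih₁ ih₂ => exact andI (ih₁ hs) (ih₂ hs)
  | andE1 _ ih => exact andE1 (ih hs)
  | andE2 _ ih => exact andE2 (ih hs)
  | orI1 _ ih => exact orI1 (ih hs)
  | orI2 _ ih => exact orI2 (ih hs)
  | orE _ _ _ ih ih₁ ih₂ =>
    exact orE (ih hs) (ih₁ (Set.insert_subset_insert hs)) (ih₂ (Set.insert_subset_insert hs))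
  | dm _ ih => exact dm (ih (Set.insert_subset_insert hs))
  | exc _ _ ih₁ ih₂ => exact exc (ih₁ hs) (ih₂ hs)

theorem weaken_insert {Γ : Set (Form C)} {φ ψ : Form C} (h : NK Γ φ) : NK (insert ψ Γ) φ :=
  h.mono (Set.subset_insert ψ Γ)

theorem lit_em (Γ : Set (Form C)) (c : C) :
    NK Γ (.or (.lit (.ofBool c true)) (.lit (.ofBool c false))) :=
  dm (exc (φ := .lit (.pos c)) (andE2 (hyp (Set.mem_insert _ _)))
    (andE1 (hyp (Set.mem_insert _ _))))

theorem kalmar (v : Val C) (φ : Form C) {Γ : Set (Form C)}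
    (hΓ : ∀ l, l.content ∈ φ.contents → v.v l = 1 → Form.lit l ∈ Γ) :
    (v.eval φ = 1 → NK Γ φ) ∧ (v.eval φ = 0 → NK Γ φ.dual) := by
  induction φ with
  | lit l =>
    have hdual := v.v_dual l
    refine ⟨fun h => hyp (hΓ l (by simp [Form.contents]) h), fun h => hyp ?_⟩
    exact hΓ l.dual (by simp [Form.contents]) (by simp_all [Val.eval])
  | bot => exact ⟨fun h => absurd h (by simp [Val.eval]), fun _ => topI⟩
  | top => exact ⟨fun _ => topI, fun h => absurd h (by simp [Val.eval])⟩
  | and φ ψ ihφ ihψ =>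
    obtain ⟨hφ₁, hφ₀⟩ := ihφ fun l hl => hΓ l (by simp [Form.contents, hl])
    obtain ⟨hψ₁, hψ₀⟩ := ihψ fun l hl => hΓ l (by simp [Form.contents, hl])
    have := v.eval_le_one φ
    have := v.eval_le_one ψ
    simp only [Val.eval, Form.dual]
    refine ⟨fun h => andI (hφ₁ (by omega)) (hψ₁ (by omega)), fun h => ?_⟩
    rcases Nat.min_eq_zero_iff.mp h with h | h
    · exact orI1 (hφ₀ h)
    · exact orI2 (hψ₀ h)
  | or φ ψ ihφ ihψ =>
    obtain ⟨hφ₁, hφ₀⟩ := ihφ fun l hl => hΓ l (by simp [Form.contents, hl])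
    obtain ⟨hψ₁, hψ₀⟩ := ihψ fun l hl => hΓ l (by simp [Form.contents, hl])
    have := v.eval_le_one φ
    have := v.eval_le_one ψ
    simp only [Val.eval, Form.dual]
    refine ⟨fun h => ?_, fun h => andI (hφ₀ (by omega)) (hψ₀ (by omega))⟩
    by_cases hφ : v.eval φ = 1
    · exact orI1 (hφ₁ hφ)
    · exact orI2 (hψ₁ (by omega))
  | imp φ ψ ihφ ihψ =>
    obtain ⟨hφ₁, hφ₀⟩ := ihφ fun l hl => hΓ l (by simp [Form.contents, hl])
    obtain ⟨hψ₁, hψ₀⟩ := ihψ fun l hl => hΓ l (by simp [Form.contents, hl])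
    have := v.eval_le_one φ
    have := v.eval_le_one ψ
    simp only [Val.eval, Form.dual]
    refine ⟨fun h => ?_, fun h => andI (hφ₁ (by omega)) (hψ₀ (by omega))⟩
    by_cases hψ : v.eval ψ = 1
    · exact impI (hψ₁ hψ).weaken_insert
    · exact impI (botE (exc (hyp (Set.mem_insert φ Γ)) (hφ₀ (by omega)).weaken_insert))

theorem of_forall_assignment {φ : Form C} (cs : List C) {Γ : Set (Form C)}
    (H : ∀ s : C → Bool, NK (Γ ∪ litAssumptions s cs) φ) : NK Γ φ := by
  classical
  induction cs generalizing Γ with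
  | nil => simpa [litAssumptions] using H fun _ => true
  | cons c cs ih =>
    have hcase (b : Bool) : NK (insert (.lit (.ofBool c b)) Γ) φ := by
      refine ih fun s => (H (Function.update s c b)).mono ?_
      rintro γ (hγ | ⟨c', hc', rfl⟩)
      · exact .inl (Set.mem_insert_of_mem _ hγ)
      by_cases hc : c' = c
      · subst hc
        exact .inl (by simp)
      · exact .inr ⟨c', (List.mem_cons.mp hc').resolve_left hc, by
          rw [Function.update_of_ne hc]⟩
    exact orE (lit_em Γ c) (hcase true) (hcase false)

end NK

/-- completeness of NK±: every valid formula is provable. -/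
theorem NK_complete {C : Type} (φ : Form C) (h : Entails ∅ φ) :
    NK ∅ φ := by
  refine NK.of_forall_assignment φ.contents fun s => ?_
  refine (NK.kalmar (.ofAssignment s) φ fun l hl hv => ?_).1 (h _ (by simp))
  exact .inr ⟨l.content, hl, by rw [← Val.eq_ofBool_of_ofAssignment_eq_one hv]⟩
end

section
/- Peirce's Law ((φ→ψ)→φ)→φ is derivable in NK± for any formulas φ, ψ. -/
/-! The dual of the dual of a formula is intuitionistically equivalent to it, so DM followed by
double-dual elimination is reductio ad absurdum: from `Γ, φ⊥ ⊢ ⊥` infer `Γ ⊢ φ`. Peirce's law is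
then derived as in classical logic: assuming `(φ → ψ) → φ` and `φ⊥`, the hypothesis `φ⊥` makes
`φ → ψ` derivable by explosion, hence `φ`, contradicting `φ⊥`. -/

namespace NK

variable {C : Type} {Γ : Set (Form C)}

theorem absurd {φ χ : Form C} (h : NK Γ φ) (hd : NK Γ φ.dual) : NK Γ χ :=
  botE (exc h hd)

theorem of_dual_dual (φ : Form C) : ∀ {Γ : Set (Form C)}, NK Γ φ.dual.dual → NK Γ φ := by
  induction φ with
  | lit l => intro Γ h; cases l <;> exact h
  | bot => intro Γ h; exact h
  | top => intro Γ _; exact topI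
  | and φ ψ ihφ ihψ =>
    intro Γ h
    exact andI (ihφ (andE1 h)) (ihψ (andE2 h))
  | or φ ψ ihφ ihψ =>
    intro Γ h
    exact orE h (orI1 (ihφ (hyp (by simp)))) (orI2 (ihψ (hyp (by simp))))
  | imp φ ψ _ ihψ =>
    intro Γ h
    -- `(φ → ψ)⊥⊥` unfolds to `φ⊥ ∨ ψ⊥⊥`
    refine orE h (impI ?_) (impI ?_)
    · exact absurd (φ := φ) (hyp (by simp)) (hyp (by simp))
    · exact ihψ (hyp (by simp))

theorem byContradiction {φ : Form C} (h : NK (insert φ.dual Γ) .bot) : NK Γ φ :=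
  of_dual_dual φ (dm h)

end NK

/-- Peirce's Law is derivable in NK±. -/
theorem NK_peirce {C : Type} (φ ψ : Form C) :
    NK ∅ (Form.imp (Form.imp (Form.imp φ ψ) φ) φ) := by
  refine NK.impI (NK.byContradiction ?_)
  set Γ : Set (Form C) := insert φ.dual (insert (Form.imp (Form.imp φ ψ) φ) ∅)
  have h_not : NK Γ φ.dual := NK.hyp (by simp [Γ])
  have h_peirce : NK Γ (Form.imp (Form.imp φ ψ) φ) := NK.hyp (by simp [Γ])
  have h_imp : NK Γ (Form.imp φ ψ) :=
    NK.impI (NK.absurd (φ := φ) (NK.hyp (by simp)) (NK.hyp (by simp [Γ])))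
  exact NK.exc (NK.impE h_peirce h_imp) h_not
end

section
/- The law of excluded middle φ ∨ φ⊥ is derivable in NK± for any formula φ. -/
/-!
The dual of `φ⊥ ∧ φ` is `φ⊥⊥ ∨ φ⊥`, so DM applied to the refutation of `φ⊥ ∧ φ` by EXC
derives `φ⊥⊥ ∨ φ⊥` outright. It remains to eliminate the double dual, `φ⊥⊥ ⊢ φ`, by
induction on `φ`: the dual is syntactically involutive except at implications, where
`(φ → ψ)⊥⊥ = φ⊥ ∨ ψ⊥⊥`, and each disjunct yields `φ → ψ` (the first by EXC against `φ`).
-/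

lemma NK.hyp_insert {C : Type} (Γ : Set (Form C)) (φ : Form C) : NK (insert φ Γ) φ :=
  NK.hyp (Set.mem_insert φ Γ)

lemma NK.of_dual_dual_s7 {C : Type} {Γ : Set (Form C)} {φ : Form C}
    (h : NK Γ φ.dual.dual) : NK Γ φ := by
  induction φ generalizing Γ with
  | lit l => cases l <;> exact h
  | bot => exact h
  | top => exact NK.topI
  | and φ ψ ihφ ihψ => exact NK.andI (ihφ (NK.andE1 h)) (ihψ (NK.andE2 h))
  | or φ ψ ihφ ihψ =>
      exact NK.orE h (NK.orI1 (ihφ (NK.hyp_insert _ _))) (NK.orI2 (ihψ (NK.hyp_insert _ _)))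
  | imp φ ψ _ ihψ =>
      refine NK.orE h (NK.impI ?_) (NK.impI ?_)
      · exact NK.botE (NK.exc (NK.hyp_insert _ _)
          (NK.hyp (Set.mem_insert_of_mem _ (Set.mem_insert _ _))))
      · exact ihψ (NK.hyp (Set.mem_insert_of_mem _ (Set.mem_insert _ _)))

lemma NK.dual_dual_or_dual {C : Type} (Γ : Set (Form C)) (φ : Form C) :
    NK Γ (Form.or φ.dual.dual φ.dual) :=
  have hyp := NK.hyp_insert Γ (Form.and φ.dual φ)
  NK.dm (NK.exc (NK.andE2 hyp) (NK.andE1 hyp))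

/-- excluded middle `φ ∨ φ⊥` is derivable in NK±. -/
theorem NK_lem {C : Type} (φ : Form C) : NK ∅ (Form.or φ φ.dual) :=
  NK.orE (NK.dual_dual_or_dual ∅ φ)
    (NK.orI1 (NK.of_dual_dual_s7 (NK.hyp_insert _ _)))
    (NK.orI2 (NK.hyp_insert _ _))
end

section
/- Atomic cut: for any sets of literals M, L, any literal (or ⊥) l, and any base B: M,L ⊢_B l holds iff for every base X ⊇ B, if ⊢_X m for every m ∈ M, then L ⊢_X l. -/
/-!
Left to right: a derivation from `M ∪ L` transfers to any larger base `X`, and there every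
appeal (by REF) to a hypothesis `m ∈ M` is replaced by a derivation of `m` from no hypotheses.
Right to left: extend `B` by the axioms `⇒ m` for `m ∈ M`; in a derivation over the extended
base, each application of such an axiom becomes an appeal to the hypothesis `m`.
-/

def axiomBase {C : Type} (M : Set (Lit C)) : Base C :=
  (fun m => ⟨[], m⟩) '' M

namespace Deriv

variable {C : Type} {B : Base C}

theorem mono_ctx {S T : Set (Lit C)} {l : Option (Lit C)} (h : Deriv B S l) (hST : S ⊆ T) :
    Deriv B T l := by
  induction h generalizing T with
  | ref hl => exact .ref (hST hl)
  | app r hr _ ih => exact .app r hr fun p hp => ih p hp (Set.union_subset_union_right _ hST)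
  | abs _ _ ih₁ ih₂ => exact .abs (ih₁ hST) (ih₂ hST)
  | dm _ ih => exact .dm (ih (Set.insert_subset_insert hST))

theorem mono_base {X : Base C} {S : Set (Lit C)} {l : Option (Lit C)} (hBX : B ⊆ X)
    (h : Deriv B S l) : Deriv X S l := by
  induction h with
  | ref hl => exact .ref hl
  | app r hr _ ih => exact .app r (hBX hr) ih
  | abs _ _ ih₁ ih₂ => exact .abs ih₁ ih₂
  | dm _ ih => exact .dm ih

theorem cut {M L : Set (Lit C)} {l : Option (Lit C)} (h : Deriv B (M ∪ L) l)
    (hM : ∀ m ∈ M, Deriv B ∅ (some m)) : Deriv B L l := by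
  suffices ∀ {S l}, Deriv B S l → ∀ L, S ⊆ M ∪ L → Deriv B L l from this h L subset_rfl
  clear h L l
  intro S l h
  induction h with
  | ref hl =>
    intro L hSL
    rcases hSL hl with hm | hL
    · exact (hM _ hm).mono_ctx (Set.empty_subset L)
    · exact .ref hL
  | app r hr _ ih =>
    intro L hSL
    refine .app r hr fun p hp => ih p hp (p.1 ∪ L) ?_
    rw [Set.union_left_comm]
    exact Set.union_subset_union_right _ hSL
  | abs _ _ ih₁ ih₂ => exact fun L hSL => .abs (ih₁ L hSL) (ih₂ L hSL)
  | dm _ ih =>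
    intro L hSL
    refine .dm (ih (insert _ L) ?_)
    rw [Set.union_insert]
    exact Set.insert_subset_insert hSL

theorem of_mem_axiomBase {M : Set (Lit C)} {m : Lit C}
    (hm : m ∈ M) : Deriv (B ∪ axiomBase M) ∅ (some m) :=
  .app ⟨[], m⟩ (Or.inr ⟨m, hm, rfl⟩) (by simp)

theorem of_union_axiomBase {M S : Set (Lit C)}
    {l : Option (Lit C)} (h : Deriv (B ∪ axiomBase M) S l) : Deriv B (M ∪ S) l := by
  induction h with
  | ref hl => exact .ref (Or.inr hl)
  | app r hr _ ih =>
    rcases hr with hr | ⟨m, hm, rfl⟩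
    · exact .app r hr fun p hp => Set.union_left_comm M p.1 _ ▸ ih p hp
    · exact .ref (Or.inl hm)
  | abs _ _ ih₁ ih₂ => exact .abs ih₁ ih₂
  | dm _ ih => exact .dm (Set.union_insert ▸ ih)

end Deriv

/-- atomic cut. -/
theorem Deriv_cut {C : Type} (B : Base C) (M L : Set (Lit C)) (l : Option (Lit C)) :
    Deriv B (M ∪ L) l ↔
      ∀ X : Base C, B ⊆ X → (∀ m ∈ M, Deriv X ∅ (some m)) → Deriv X L l := by
  refine ⟨fun h X hBX hM => (h.mono_base hBX).cut hM, fun h => ?_⟩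
  exact (h (B ∪ axiomBase M) Set.subset_union_left fun _ => .of_mem_axiomBase).of_union_axiomBase
end

section
/- For any literal l and any base B: l ⊢_B ⊥ holds iff l ⊢_B m holds for every literal m. -/
lemma Lit.dual_dual {C : Type} (l : Lit C) : l.dual.dual = l := by
  cases l <;> rfl

lemma Deriv.mono {C : Type} {B : Base C} {L L' : Set (Lit C)} {o : Option (Lit C)}
    (h : Deriv B L o) (hsub : L ⊆ L') : Deriv B L' o := by
  induction h generalizing L' with
  | ref hm => exact .ref (hsub hm)
  | app r hr _ ih => exact .app r hr fun p hp => ih p hp (Set.union_subset_union_right _ hsub)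
  | abs _ _ ih₁ ih₂ => exact .abs (ih₁ hsub) (ih₂ hsub)
  | dm _ ih => exact .dm (ih (Set.insert_subset_insert hsub))

/-- Ex falso is admissible: weaken `L ⊢ ⊥` to `m⊥, L ⊢ ⊥` and discharge `m⊥` by DM. -/
lemma Deriv.some_of_none {C : Type} {B : Base C} {L : Set (Lit C)} (h : Deriv B L none)
    (m : Lit C) : Deriv B L (some m) := by
  simpa only [Lit.dual_dual] using Deriv.dm (l := m.dual) (h.mono (Set.subset_insert _ _))

/-- `l ⊢_B ⊥` iff `l ⊢_B m` for every literal `m`. -/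
theorem Deriv_bot_iff {C : Type} (B : Base C) (l : Lit C) :
    Deriv B {l} none ↔ ∀ m : Lit C, Deriv B {l} (some m) :=
  ⟨Deriv.some_of_none, fun h => .abs (h l) (h l.dual)⟩
end
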